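/- arXiv:1010.0481 — 8 statements merged into one kernel-verified Lean document; each statement's English description precedes it below -/
import Mathlib

section
/- Let Δ be a set, let α, β ∈ Δ, and let n, i, j, a be natural numbers with 1 ≤ i < j ≤ n and j < a. Suppose x : {1,…,n} → Δ is such that for each ℓ ∈ {i, j}, the number of coordinates k with 1 ≤ k ≤ ℓ and x(k) ≠ α, plus the number of coordinates k with ℓ+1 ≤ k ≤ n and x(k) ≠ β, equals a − ℓ. Then x(k) = α for every k with i+1 ≤ k ≤ j. -/
open scoped Classical

/-- Lemma 4.4 (difficultorbits2): if for `ℓ ∈ {i, j}` the number of coordinates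
`k ∈ [1, ℓ]` with `x k ≠ α` plus the number of coordinates `k ∈ [ℓ+1, n]` with
`x k ≠ β` equals `a - ℓ`, then all entries of `x` in coordinates `i+1` to `j`
equal `α`. -/
theorem stmt0 {Δ : Type*} (α β : Δ) (n i j a : ℕ)
    (hi : 1 ≤ i) (hij : i < j) (hjn : j ≤ n) (hja : j < a)
    (x : ℕ → Δ)
    (hx : ∀ ℓ ∈ ({i, j} : Finset ℕ),
      ((Finset.Icc 1 ℓ).filter (fun k => x k ≠ α)).card +
        ((Finset.Icc (ℓ + 1) n).filter (fun k => x k ≠ β)).card = a - ℓ) :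
    ∀ k, i + 1 ≤ k → k ≤ j → x k = α := by
  have hxi := hx i (by simp)
  have hxj := hx j (by simp)
  have hs1 : Finset.Icc 1 j = Finset.Icc 1 i ∪ Finset.Icc (i + 1) j := by
    ext k; simp only [Finset.mem_Icc, Finset.mem_union]; omega
  have hs2 : Finset.Icc (i + 1) n = Finset.Icc (i + 1) j ∪ Finset.Icc (j + 1) n := by
    ext k; simp only [Finset.mem_Icc, Finset.mem_union]; omega
  have hd1 : Disjoint ((Finset.Icc 1 i).filter (fun k => x k ≠ α))
      ((Finset.Icc (i + 1) j).filter (fun k => x k ≠ α)) := by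
    rw [Finset.disjoint_left]
    intro k hk hk'
    simp only [Finset.mem_filter, Finset.mem_Icc] at hk hk'
    omega
  have hd2 : Disjoint ((Finset.Icc (i + 1) j).filter (fun k => x k ≠ β))
      ((Finset.Icc (j + 1) n).filter (fun k => x k ≠ β)) := by
    rw [Finset.disjoint_left]
    intro k hk hk'
    simp only [Finset.mem_filter, Finset.mem_Icc] at hk hk'
    omega
  rw [hs1, Finset.filter_union, Finset.card_union_of_disjoint hd1] at hxj
  rw [hs2, Finset.filter_union, Finset.card_union_of_disjoint hd2] at hxi
  have hc : ((Finset.Icc (i + 1) j).filter (fun k => x k ≠ α)).card = 0 := by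
    have hle : ((Finset.Icc (i + 1) j).filter (fun k => x k ≠ β)).card ≤ j - i := by
      calc _ ≤ (Finset.Icc (i + 1) j).card := Finset.card_filter_le _ _
        _ = j - i := by rw [Nat.card_Icc]; omega
    omega
  have hemp := Finset.card_eq_zero.mp hc
  intro k hk1 hk2
  by_contra hne
  have : k ∈ (Finset.Icc (i + 1) j).filter (fun k => x k ≠ α) := by
    simp [Finset.mem_Icc, hne, hk1, hk2]
  rw [hemp] at this
  exact absurd this (Finset.notMem_empty k)
end

section
/- Let Δ be a set, let α, β ∈ Δ, and let n, i, j, a be natural numbers with 1 ≤ i < j < a and 2a ≤ n. Suppose y : {1,…,n} → Δ satisfies, for each ℓ ∈ {i, j}: the number of coordinates k with 1 ≤ k ≤ 2ℓ and y(k) ≠ α, plus the number of coordinates k with 2ℓ+1 ≤ k ≤ n and y(k) ≠ β, equals 2a − 2ℓ. Then y(k) = α for every k with 2i+1 ≤ k ≤ 2j. -/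
open scoped Classical

/-- Corollary 4.6 (difficultorbitscor), combinatorial form: if for `ℓ ∈ {i, j}`
the number of coordinates `k ∈ [1, 2ℓ]` with `y k ≠ α` plus the number of
coordinates `k ∈ [2ℓ+1, n]` with `y k ≠ β` equals `2a - 2ℓ`, then all entries
of `y` in coordinates `2i+1` to `2j` equal `α`. -/
theorem stmt1 {Δ : Type*} (α β : Δ) (n i j a : ℕ)
    (hi : 1 ≤ i) (hij : i < j) (hja : j < a) (han : 2 * a ≤ n)
    (y : ℕ → Δ)
    (hy : ∀ ℓ ∈ ({i, j} : Finset ℕ),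
      ((Finset.Icc 1 (2 * ℓ)).filter (fun k => y k ≠ α)).card +
        ((Finset.Icc (2 * ℓ + 1) n).filter (fun k => y k ≠ β)).card = 2 * a - 2 * ℓ) :
    ∀ k, 2 * i + 1 ≤ k → k ≤ 2 * j → y k = α := by
  have hyi := hy i (by simp)
  have hyj := hy j (by simp)
  set S := Finset.Icc (2 * i + 1) (2 * j) with hS
  -- split Icc 1 (2j) = Icc 1 (2i) ∪ S
  have hsplit1 : Finset.Icc 1 (2 * j) = Finset.Icc 1 (2 * i) ∪ S := by
    ext k; simp [S, Finset.mem_Icc, Finset.mem_union]; omega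
  have hsplit2 : Finset.Icc (2 * i + 1) n = S ∪ Finset.Icc (2 * j + 1) n := by
    ext k; simp [S, Finset.mem_Icc, Finset.mem_union]; omega
  have hd1 : Disjoint (Finset.Icc 1 (2 * i)) S := by
    rw [Finset.disjoint_left]; intro k hk hk'
    simp [S, Finset.mem_Icc] at hk hk'; omega
  have hd2 : Disjoint S (Finset.Icc (2 * j + 1) n) := by
    rw [Finset.disjoint_left]; intro k hk hk'
    simp [S, Finset.mem_Icc] at hk hk'; omega
  rw [hsplit1, Finset.filter_union,
    Finset.card_union_of_disjoint (Finset.disjoint_filter_filter hd1)] at hyj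
  rw [hsplit2, Finset.filter_union,
    Finset.card_union_of_disjoint (Finset.disjoint_filter_filter hd2)] at hyi
  have hb2 : (S.filter (fun k => y k ≠ β)).card ≤ S.card :=
    Finset.card_filter_le _ _
  have hScard : S.card = 2 * j - 2 * i := by simp [S, Nat.card_Icc]
  have ha2 : (S.filter (fun k => y k ≠ α)).card = 0 := by omega
  intro k hk1 hk2
  by_contra hne
  have hk : k ∈ S.filter (fun k => y k ≠ α) := by
    simp [S, Finset.mem_Icc, hne]; omega
  have := Finset.card_pos.mpr ⟨k, hk⟩
  omega
end

section
/- Let T be a group with identity 1 and let n be a natural number. Suppose u, v : {1,…,n} → T and t ∈ T satisfy v(k) = t·u(k) for all k, and suppose that 2·#{k : u(k) ≠ 1} < n and 2·#{k : v(k) ≠ 1} < n. Then t = 1, and hence u = v. -/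
open scoped Classical

/-- Lemma 6.1 (uniquerep): if `v = t • u` coordinatewise on `[1, n]` and both
`u` and `v` have support (number of coordinates different from `1`) strictly
less than `n/2`, then `t = 1` and hence `u = v` on `[1, n]`. -/
theorem stmt4 {T : Type*} [Group T] (n : ℕ) (u v : ℕ → T) (t : T)
    (huv : ∀ k ∈ Finset.Icc 1 n, v k = t * u k)
    (hu : 2 * ((Finset.Icc 1 n).filter (fun k => u k ≠ 1)).card < n)
    (hv : 2 * ((Finset.Icc 1 n).filter (fun k => v k ≠ 1)).card < n) :
    t = 1 ∧ ∀ k ∈ Finset.Icc 1 n, u k = v k := by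
  have ht : t = 1 := by
    by_contra ht
    have hsub : Finset.Icc 1 n ⊆
        ((Finset.Icc 1 n).filter (fun k => u k ≠ 1)) ∪
        ((Finset.Icc 1 n).filter (fun k => v k ≠ 1)) := by
      intro k hk
      simp only [Finset.mem_union, Finset.mem_filter]
      by_contra h
      push_neg at h
      have hu1 : u k = 1 := by by_contra h'; exact h' (h.1 hk)
      have hv1 : v k = 1 := by by_contra h'; exact h' (h.2 hk)
      have := huv k hk
      rw [hu1, hv1, mul_one] at this
      exact ht this.symm
    have hcard := Finset.card_le_card hsub
    rw [Nat.card_Icc] at hcard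
    have := Finset.card_union_le ((Finset.Icc 1 n).filter (fun k => u k ≠ 1))
      ((Finset.Icc 1 n).filter (fun k => v k ≠ 1))
    omega
  refine ⟨ht, fun k hk => ?_⟩
  rw [huv k hk, ht, one_mul]
end

section
/- Let T be a group with identity 1, let α, t ∈ T with α ≠ 1, and let n, s, a be natural numbers with s < a and 4a ≤ n − 1. Let σ be a permutation of {1,…,n}. Define v : {1,…,n} → T by v(k) = t⁻¹αt for 2s+1 ≤ k ≤ 2a and v(k) = 1 otherwise, and define Rep : {1,…,n} → T by Rep(k) = v(σ⁻¹(k))·α for 1 ≤ k ≤ 2s and Rep(k) = v(σ⁻¹(k)) for 2s+1 ≤ k ≤ n. Then (i) #{k : Rep(k) ≠ 1} ≤ 2a, and (ii) for every c ∈ T with c ≠ 1, the function k ↦ c·Rep(k) satisfies 2·#{k : c·Rep(k) ≠ 1} > n. -/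
open scoped Classical

/-- Lemma 6.3 (repdag): the representative `Rep` (coordinates indexed by
`Fin n`, coordinate `k` corresponding to position `k+1 ∈ {1, …, n}`) of the
image of `x_a` under an element of the stabiliser of `x_s` has support at most
`2a`, and every other representative `c · Rep` with `c ≠ 1` of the same coset
of the diagonal subgroup has support strictly greater than `n/2`. -/
theorem stmt5 {T : Type*} [Group T] (α t : T) (hα : α ≠ 1)
    (n s a : ℕ) (hsa : s < a) (hna : 4 * a ≤ n - 1)
    (σ : Equiv.Perm (Fin n))
    (v Rep : Fin n → T)
    (hv : ∀ k : Fin n,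
      v k = if 2 * s ≤ (k : ℕ) ∧ (k : ℕ) < 2 * a then t⁻¹ * α * t else 1)
    (hRep : ∀ k : Fin n,
      Rep k = if (k : ℕ) < 2 * s then v (σ⁻¹ k) * α else v (σ⁻¹ k)) :
    (Finset.univ.filter (fun k : Fin n => Rep k ≠ 1)).card ≤ 2 * a ∧
      ∀ c : T, c ≠ 1 →
        n < 2 * (Finset.univ.filter (fun k : Fin n => c * Rep k ≠ 1)).card := by
  classical
  set A := Finset.univ.filter (fun k : Fin n => (k : ℕ) < 2 * s) with hA
  set B := Finset.univ.filter
      (fun k : Fin n => 2 * s ≤ ((σ⁻¹ k : Fin n) : ℕ) ∧ ((σ⁻¹ k : Fin n) : ℕ) < 2 * a) with hB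
  have hsub : Finset.univ.filter (fun k : Fin n => Rep k ≠ 1) ⊆ A ∪ B := by
    intro k hk
    simp only [Finset.mem_filter, Finset.mem_univ, true_and] at hk
    by_cases h1 : (k : ℕ) < 2 * s
    · exact Finset.mem_union_left _ (by simp [hA, h1])
    · refine Finset.mem_union_right _ ?_
      rw [hRep k, if_neg h1, hv] at hk
      by_contra hcond
      simp only [hB, Finset.mem_filter, Finset.mem_univ, true_and] at hcond
      rw [if_neg hcond] at hk
      exact hk rfl
  have hAcard : A.card ≤ 2 * s := by
    have : A.card ≤ (Finset.range (2 * s)).card := by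
      refine Finset.card_le_card_of_injOn (fun k => (k : ℕ)) ?_ ?_
      · intro k hk
        simp only [hA, Finset.mem_filter, Finset.mem_univ, true_and] at hk
        simpa using hk
      · intro x _ y _ h
        exact Fin.ext h
    simpa using this
  have hBcard : B.card ≤ 2 * a - 2 * s := by
    have : B.card ≤ (Finset.Ico (2 * s) (2 * a)).card := by
      refine Finset.card_le_card_of_injOn (fun k => ((σ⁻¹ k : Fin n) : ℕ)) ?_ ?_
      · intro k hk
        simp only [hB, Finset.mem_filter, Finset.mem_univ, true_and] at hk
        simpa [Finset.mem_Ico] using hk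
      · intro x _ y _ h
        have := Fin.ext h
        exact σ⁻¹.injective this
    simpa using this
  have hcard1 : (Finset.univ.filter (fun k : Fin n => Rep k ≠ 1)).card ≤ 2 * a := by
    calc (Finset.univ.filter (fun k : Fin n => Rep k ≠ 1)).card
        ≤ (A ∪ B).card := Finset.card_le_card hsub
      _ ≤ A.card + B.card := Finset.card_union_le _ _
      _ ≤ 2 * s + (2 * a - 2 * s) := Nat.add_le_add hAcard hBcard
      _ = 2 * a := by omega
  refine ⟨hcard1, ?_⟩
  intro c hc
  have hcompl : (Finset.univ.filter (fun k : Fin n => Rep k ≠ 1)).card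
      + (Finset.univ.filter (fun k : Fin n => ¬ Rep k ≠ 1)).card = n := by
    rw [Finset.card_filter_add_card_filter_not]
    simp
  have hsub2 : Finset.univ.filter (fun k : Fin n => ¬ Rep k ≠ 1)
      ⊆ Finset.univ.filter (fun k : Fin n => c * Rep k ≠ 1) := by
    intro k hk
    simp only [Finset.mem_filter, Finset.mem_univ, true_and, not_not] at hk ⊢
    rw [hk, mul_one]
    exact hc
  have hle := Finset.card_le_card hsub2
  omega
end

section
/- Let m, b, i, j be natural numbers with i < j < b and 4b ≤ m. For each c with 4c ≤ m, let x_c denote the permutation of {1,…,m} that is the product of the disjoint transpositions (1 2)(3 4)⋯(4c−1 4c), i.e. x_c swaps 2r−1 and 2r for each 1 ≤ r ≤ 2c and fixes all other points. Suppose y is a permutation of {1,…,m} such that y·x_i is conjugate to x_{b−i} by an element of the alternating group A_m, and y·x_j is conjugate to x_{b−j} by an element of A_m. Then for every r with 2i+1 ≤ r ≤ 2j, y(2r−1) = 2r and y(2r) = 2r−1. -/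
/-- `x` is the permutation of `{1, …, m}` (encoded as `Fin m`, index `k`
corresponding to point `k+1`) that is the product of the disjoint
transpositions `(1 2)(3 4)⋯(4c−1 4c)`: it swaps the points `2r−1` and `2r`
for each `1 ≤ r ≤ 2c` and fixes all other points. -/
def IsXPerm (m c : ℕ) (x : Equiv.Perm (Fin m)) : Prop :=
  ∀ k : Fin m,
    ((k : ℕ) < 4 * c →
      (((k : ℕ) % 2 = 0 → ((x k : ℕ) = (k : ℕ) + 1)) ∧
        ((k : ℕ) % 2 = 1 → ((x k : ℕ) = (k : ℕ) - 1)))) ∧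
    (4 * c ≤ (k : ℕ) → x k = k)

lemma xperm_val {m c : ℕ} {x : Equiv.Perm (Fin m)} (h : IsXPerm m c x) (k : Fin m) :
    (x k : ℕ) = if (k : ℕ) < 4 * c then
      (if (k : ℕ) % 2 = 0 then (k : ℕ) + 1 else (k : ℕ) - 1) else (k : ℕ) := by
  rcases Nat.lt_or_ge (k : ℕ) (4 * c) with hk | hk
  · rcases Nat.even_or_odd (k : ℕ) with he | ho
    · rw [if_pos hk, if_pos (Nat.even_iff.mp he)]
      exact ((h k).1 hk).1 (Nat.even_iff.mp he)
    · have ho' := Nat.odd_iff.mp ho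
      rw [if_pos hk, if_neg (by omega : ¬ (k:ℕ) % 2 = 0)]
      exact ((h k).1 hk).2 ho'
  · rw [if_neg (by omega)]
    exact congrArg Fin.val ((h k).2 hk)

lemma xperm_invol {m c : ℕ} {x : Equiv.Perm (Fin m)} (h : IsXPerm m c x) (k : Fin m) :
    x (x k) = k := by
  apply Fin.ext
  have h1 := xperm_val h k
  have h2 := xperm_val h (x k)
  rw [h1] at h2
  split_ifs at h1 h2 with hk hp <;> omega

lemma xperm_support {m c : ℕ} {x : Equiv.Perm (Fin m)} (h : IsXPerm m c x) :
    x.support = Finset.univ.filter (fun k : Fin m => (k : ℕ) < 4 * c) := by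
  ext k
  simp only [Equiv.Perm.mem_support, Finset.mem_filter, Finset.mem_univ, true_and]
  have h1 := xperm_val h k
  constructor
  · intro hne
    by_contra hk
    exact hne (Fin.ext (by rw [h1, if_neg hk]))
  · intro hk hne
    have := congrArg Fin.val hne
    rw [h1, if_pos hk] at this
    split_ifs at this <;> omega

lemma card_filter_lt (m n : ℕ) (h : n ≤ m) :
    ((Finset.univ : Finset (Fin m)).filter (fun k : Fin m => (k : ℕ) < n)).card = n := by
  have he : (Finset.univ : Finset (Fin m)).filter (fun k : Fin m => (k : ℕ) < n)
      = (Finset.univ : Finset (Fin n)).map (Fin.castLEEmb h) := by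
    ext k
    simp only [Finset.mem_filter, Finset.mem_map, Finset.mem_univ, true_and]
    constructor
    · intro hk
      exact ⟨⟨k, hk⟩, by ext; simp⟩
    · rintro ⟨a, -, rfl⟩
      simp
  rw [he, Finset.card_map, Finset.card_univ, Fintype.card_fin]

/-- Lemma 5.2 (lem:containstrans): if `y·x_i` is conjugate to `x_{b−i}` and
`y·x_j` is conjugate to `x_{b−j}` by elements of the alternating group, then
`y` swaps `2r−1` and `2r` for every `2i+1 ≤ r ≤ 2j`. -/
theorem stmt6 (m b i j : ℕ) (hij : i < j) (hjb : j < b) (hbm : 4 * b ≤ m)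
    (xi xj xbi xbj : Equiv.Perm (Fin m))
    (hxi : IsXPerm m i xi) (hxj : IsXPerm m j xj)
    (hxbi : IsXPerm m (b - i) xbi) (hxbj : IsXPerm m (b - j) xbj)
    (y : Equiv.Perm (Fin m))
    (hyi : ∃ g ∈ alternatingGroup (Fin m), y * xi = g⁻¹ * xbi * g)
    (hyj : ∃ g ∈ alternatingGroup (Fin m), y * xj = g⁻¹ * xbj * g) :
    ∀ r, 2 * i + 1 ≤ r → r ≤ 2 * j →
      ∀ (h1 : 2 * r - 2 < m) (h2 : 2 * r - 1 < m),
        y ⟨2 * r - 2, h1⟩ = ⟨2 * r - 1, h2⟩ ∧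
          y ⟨2 * r - 1, h2⟩ = ⟨2 * r - 2, h1⟩ := by
  obtain ⟨g, -, hg⟩ := hyi
  obtain ⟨g', -, hg'⟩ := hyj
  set u := y * xi with hu
  set v := y * xj with hv
  set t := xi * xj with htdef
  -- cardinalities of supports
  have hcu : u.support.card = 4 * (b - i) := by
    have h' : u = g⁻¹ * xbi * (g⁻¹)⁻¹ := by rw [hg, inv_inv]
    rw [h', Equiv.Perm.card_support_conj, xperm_support hxbi,
      card_filter_lt m _ (by omega)]
  have hcv : v.support.card = 4 * (b - j) := by
    have h' : v = g'⁻¹ * xbj * (g'⁻¹)⁻¹ := by rw [hg', inv_inv]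
    rw [h', Equiv.Perm.card_support_conj, xperm_support hxbj,
      card_filter_lt m _ (by omega)]
  -- t fixes points outside [4i, 4j)
  have htval : ∀ k : Fin m, ((k : ℕ) < 4 * i ∨ 4 * j ≤ (k : ℕ)) → t k = k := by
    intro k hk
    apply Fin.ext
    have h1 := xperm_val hxj k
    have h2 := xperm_val hxi (xj k)
    rw [h1] at h2
    show (xi (xj k) : ℕ) = k
    rw [h2]
    split_ifs <;> omega
  have hts : t.support ⊆ xj.support \ xi.support := by
    intro k hk
    rw [Equiv.Perm.mem_support] at hk
    rw [xperm_support hxi, xperm_support hxj]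
    simp only [Finset.mem_sdiff, Finset.mem_filter, Finset.mem_univ, true_and]
    constructor
    · by_contra hc
      exact hk (htval k (Or.inr (by omega)))
    · intro hc
      exact hk (htval k (Or.inl hc))
  have hsubs : xi.support ⊆ xj.support := by
    rw [xperm_support hxi, xperm_support hxj]
    intro k hk
    simp only [Finset.mem_filter, Finset.mem_univ, true_and] at *
    omega
  have hct : t.support.card ≤ 4 * j - 4 * i := by
    calc t.support.card ≤ (xj.support \ xi.support).card := Finset.card_le_card hts
      _ = 4 * j - 4 * i := by
          rw [Finset.card_sdiff_of_subset hsubs, xperm_support hxi, xperm_support hxj,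
            card_filter_lt m _ (by omega), card_filter_lt m _ (by omega)]
  -- v = u * t
  have hxii : xi * xi = 1 := by
    ext k
    simp [xperm_invol hxi]
  have hvut : v = u * t := by
    rw [hu, hv, htdef, mul_assoc, ← mul_assoc xi xi xj, hxii, one_mul]
  -- supp u \ supp t ⊆ supp v
  have hsub : u.support \ t.support ⊆ v.support := by
    intro k hk
    rw [Finset.mem_sdiff, Equiv.Perm.mem_support, Equiv.Perm.notMem_support] at hk
    rw [Equiv.Perm.mem_support, hvut, Equiv.Perm.mul_apply, hk.2]
    exact hk.1
  have hcard : v.support.card ≤ (u.support \ t.support).card := by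
    have := Finset.le_card_sdiff t.support u.support
    omega
  have heq : u.support \ t.support = v.support :=
    Finset.eq_of_subset_of_card_le hsub hcard
  -- points of supp t are fixed by v
  have hfix : ∀ k : Fin m, k ∈ t.support → v k = k := by
    intro k hk
    rw [← Equiv.Perm.notMem_support, ← heq, Finset.mem_sdiff]
    tauto
  -- main conclusion
  intro r hr1 hr2 h1 h2
  set p0 : Fin m := ⟨2 * r - 2, h1⟩ with hp0
  set p1 : Fin m := ⟨2 * r - 1, h2⟩ with hp1
  have hp0v : (p0 : ℕ) = 2 * r - 2 := rfl
  have hp1v : (p1 : ℕ) = 2 * r - 1 := rfl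
  have htp0 : t p0 = p1 := by
    apply Fin.ext
    have h1' := xperm_val hxj p0
    have h2' := xperm_val hxi (xj p0)
    rw [h1'] at h2'
    show (xi (xj p0) : ℕ) = (p1 : ℕ)
    rw [h2', hp1v, hp0v] at *
    split_ifs at * <;> omega
  have htp1 : t p1 = p0 := by
    apply Fin.ext
    have h1' := xperm_val hxj p1
    have h2' := xperm_val hxi (xj p1)
    rw [h1'] at h2'
    show (xi (xj p1) : ℕ) = (p0 : ℕ)
    rw [h2', hp0v, hp1v] at *
    split_ifs at * <;> omega
  have hne : p0 ≠ p1 := by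
    intro h
    have := congrArg Fin.val h
    rw [hp0v, hp1v] at this
    omega
  have hm0 : p0 ∈ t.support := by
    rw [Equiv.Perm.mem_support, htp0]
    exact hne.symm
  have hm1 : p1 ∈ t.support := by
    rw [Equiv.Perm.mem_support, htp1]
    exact hne
  have hu1 : u p1 = p0 := by
    have hh := hfix p0 hm0
    rwa [hvut, Equiv.Perm.mul_apply, htp0] at hh
  have hu0 : u p0 = p1 := by
    have hh := hfix p1 hm1
    rwa [hvut, Equiv.Perm.mul_apply, htp1] at hh
  have hxi0 : xi p0 = p0 := (hxi p0).2 (by rw [hp0v]; omega)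
  have hxi1 : xi p1 = p1 := (hxi p1).2 (by rw [hp1v]; omega)
  have hy : y = u * xi := by
    rw [hu, mul_assoc, hxii, mul_one]
  constructor
  · rw [hy, Equiv.Perm.mul_apply, hxi0, hu0]
  · rw [hy, Equiv.Perm.mul_apply, hxi1, hu1]
end

section
/- Let X and Y be types and let R : X → Y → Prop. Define a bipartite graph B on the disjoint union X ⊔ Y by declaring x ∈ X adjacent to y ∈ Y if and only if R x y (and no edges within X or within Y), and suppose B is connected. Then for every n ≥ 1, the bipartite graph on (X^n) ⊔ (Y^n) in which (x₁,…,x_n) is adjacent to (y₁,…,y_n) if and only if R x_ℓ y_ℓ holds for every ℓ, is connected. -/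
/-- The bipartite graph on `X ⊕ Y` determined by a relation `R : X → Y → Prop`:
`x ∈ X` is adjacent to `y ∈ Y` iff `R x y`, and there are no edges within `X`
or within `Y`. -/
def bipartiteGraph {X Y : Type*} (R : X → Y → Prop) : SimpleGraph (X ⊕ Y) where
  Adj a b := (∃ x y, R x y ∧ a = Sum.inl x ∧ b = Sum.inr y) ∨
    (∃ x y, R x y ∧ a = Sum.inr y ∧ b = Sum.inl x)
  symm := by
    constructor
    rintro a b (⟨x, y, hR, h1, h2⟩ | ⟨x, y, hR, h1, h2⟩)
    · exact Or.inr ⟨x, y, hR, h2, h1⟩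
    · exact Or.inl ⟨x, y, hR, h2, h1⟩
  loopless := by
    constructor
    rintro a (⟨x, y, hR, h1, h2⟩ | ⟨x, y, hR, h1, h2⟩) <;> rw [h1] at h2 <;> simp at h2

/-!
Joining `x ∈ X` to `y ∈ Y` by a walk of length `2k + 1` in the bipartite graph can be done
coordinatewise, and going back and forth along an edge lengthens such a walk to any larger odd
length. So tuples `f` in `X` and `g` in `Y` are joined coordinatewise by walks of one common odd
length, which together form a walk in the product graph. Two tuples on the same side are joined
through any tuple on the other side; if that side is empty, the factor graph has no edges, so
connectedness makes the nonempty side a single vertex.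
-/

open SimpleGraph Sum

namespace bipartiteGraph

variable {X Y : Type*} {R : X → Y → Prop}

lemma eq_bot_of_isEmpty_left [IsEmpty X] : bipartiteGraph R = ⊥ := by
  ext a b
  simp [bipartiteGraph]

lemma eq_bot_of_isEmpty_right [IsEmpty Y] : bipartiteGraph R = ⊥ := by
  ext a b
  simp [bipartiteGraph]

lemma eq_of_reachable_inl_inl [IsEmpty Y] {x x' : X}
    (h : (bipartiteGraph R).Reachable (inl x) (inl x')) : x = x' := by
  simpa [eq_bot_of_isEmpty_right, reachable_bot] using h

lemma eq_of_reachable_inr_inr [IsEmpty X] {y y' : Y}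
    (h : (bipartiteGraph R).Reachable (inr y) (inr y')) : y = y' := by
  simpa [eq_bot_of_isEmpty_left, reachable_bot] using h

/-- `OddChain R k x y` says that `inl x` and `inr y` are joined by a walk of length `2k + 1`
in `bipartiteGraph R`. -/
def OddChain (R : X → Y → Prop) : ℕ → X → Y → Prop
  | 0, x, y => R x y
  | k + 1, x, y => ∃ x' y', R x y' ∧ R x' y' ∧ OddChain R k x' y

lemma OddChain.succ {k : ℕ} {x : X} {y : Y} (h : OddChain R k x y) :
    OddChain R (k + 1) x y := by
  induction k generalizing x with
  | zero => exact ⟨x, y, h, h, h⟩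
  | succ k ih =>
    obtain ⟨x', y', hxy', hx'y', hchain⟩ := h
    exact ⟨x', y', hxy', hx'y', ih hchain⟩

lemma OddChain.mono {k m : ℕ} (hkm : k ≤ m) {x : X} {y : Y} (h : OddChain R k x y) :
    OddChain R m x y := by
  induction m, hkm using Nat.le_induction with
  | base => exact h
  | succ m _ ih => exact ih.succ

lemma OddChain.reachable {k : ℕ} {x : X} {y : Y} (h : OddChain R k x y) :
    (bipartiteGraph R).Reachable (inl x) (inr y) := by
  induction k generalizing x with
  | zero => exact Adj.reachable (Or.inl ⟨x, y, h, rfl, rfl⟩)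
  | succ k ih =>
    obtain ⟨x', y', hxy', hx'y', hchain⟩ := h
    exact (Adj.reachable (Or.inl ⟨x, y', hxy', rfl, rfl⟩)).trans
      ((Adj.reachable (Or.inr ⟨x', y', hx'y', rfl, rfl⟩)).trans (ih hchain))

lemma exists_oddChain_of_reachable {x : X} {y : Y}
    (h : (bipartiteGraph R).Reachable (inl x) (inr y)) : ∃ k, OddChain R k x y := by
  -- An invariant that propagates backwards along a walk ending at `inr y`.
  let P : X ⊕ Y → Prop := Sum.elim (fun x ↦ ∃ k, OddChain R k x y)
    (fun y' ↦ ∀ x, R x y' → ∃ k, OddChain R k x y)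
  suffices ∀ {u v} (_ : (bipartiteGraph R).Walk u v), v = inr y → P u from this h.some rfl
  intro u v w
  induction w with
  | nil => rintro rfl x hxy; exact ⟨0, hxy⟩
  | cons hadj _ ih =>
    intro hv
    rcases hadj with ⟨x, y', hxy', rfl, rfl⟩ | ⟨x, y', hxy', rfl, rfl⟩
    · exact ih hv x hxy'
    · obtain ⟨k, hchain⟩ := ih hv
      exact fun x'' hx''y' ↦ ⟨k + 1, x, y', hx''y', hxy', hchain⟩

lemma OddChain.pi {ι : Type*} {k : ℕ} {f : ι → X} {g : ι → Y}
    (h : ∀ ℓ, OddChain R k (f ℓ) (g ℓ)) :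
    OddChain (fun (f : ι → X) (g : ι → Y) ↦ ∀ ℓ, R (f ℓ) (g ℓ)) k f g := by
  induction k generalizing f with
  | zero => exact h
  | succ k ih =>
    choose x' y' hxy' hx'y' hchain using h
    exact ⟨x', y', hxy', hx'y', ih hchain⟩

theorem connected_pi {ι : Type*} [Finite ι] (hR : (bipartiteGraph R).Connected) :
    (bipartiteGraph fun (f : ι → X) (g : ι → Y) ↦ ∀ ℓ, R (f ℓ) (g ℓ)).Connected := by
  set G := bipartiteGraph fun (f : ι → X) (g : ι → Y) ↦ ∀ ℓ, R (f ℓ) (g ℓ)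
  have reachable_inl_inr (f : ι → X) (g : ι → Y) : G.Reachable (inl f) (inr g) := by
    choose k hk using fun ℓ ↦
      exists_oddChain_of_reachable (hR.preconnected (inl (f ℓ)) (inr (g ℓ)))
    obtain ⟨K, hK⟩ := Finite.exists_le k
    exact (OddChain.pi fun ℓ ↦ (hk ℓ).mono (hK ℓ)).reachable
  have : Nonempty ((ι → X) ⊕ (ι → Y)) :=
    hR.nonempty.map (Sum.map (fun x _ ↦ x) (fun y _ ↦ y))
  refine ⟨?_⟩
  rintro (f | g) (f' | g')
  · rcases isEmpty_or_nonempty Y with hY | ⟨⟨y⟩⟩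
    · rw [funext fun ℓ ↦ eq_of_reachable_inl_inl (hR.preconnected (inl (f ℓ)) _)]
    · exact (reachable_inl_inr f fun _ ↦ y).trans (reachable_inl_inr f' fun _ ↦ y).symm
  · exact reachable_inl_inr f g'
  · exact (reachable_inl_inr f' g).symm
  · rcases isEmpty_or_nonempty X with hX | ⟨⟨x⟩⟩
    · rw [funext fun ℓ ↦ eq_of_reachable_inr_inr (hR.preconnected (inr (g ℓ)) _)]
    · exact (reachable_inl_inr (fun _ ↦ x) g).symm.trans (reachable_inl_inr (fun _ ↦ x) g')

end bipartiteGraph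

/-- Part (3) of Lemma 4.2 (lem:productup): if the bipartite graph of `R` on
`X ⊕ Y` is connected, then for every `n ≥ 1` the bipartite graph of the
coordinatewise relation on `(Fin n → X) ⊕ (Fin n → Y)` is connected. -/
theorem stmt12 {X Y : Type*} (R : X → Y → Prop)
    (hconn : (bipartiteGraph R).Connected) :
    ∀ n : ℕ, 1 ≤ n →
      (bipartiteGraph
        (fun (f : Fin n → X) (g : Fin n → Y) => ∀ ℓ, R (f ℓ) (g ℓ))).Connected :=
  fun _ _ ↦ bipartiteGraph.connected_pi hconn
end

section
/- Let I be a finite index type, let X : I → Type be a family of types, and let R be a family of relations R i j : X i → X j → Prop satisfying the symmetry condition R i j x y ↔ R j i y x. Call a function f defined on a subset S ⊆ I with f i ∈ X i a flag of type S if R i j (f i) (f j) holds for all distinct i, j ∈ S, and call a flag of type I a chamber. Suppose every flag extends to a chamber (i.e. for every flag f of type S there is a chamber c with c i = f i for all i ∈ S). Then for every n ≥ 1 the same holds for the n-th power system, whose family is X′ i = (X i)^n with relations R′ i j f g ⇔ (∀ ℓ ≤ n, R i j (f ℓ) (g ℓ)): every flag of the power system extends to a chamber of the power system. -/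
/-- `f` (a total function representing a partial function defined on `S`) is
a flag of type `S`: any two elements of distinct types in `S` are incident. -/
def IsFlagOn {I : Type*} {X : I → Type*} (R : ∀ i j, X i → X j → Prop)
    (S : Set I) (f : ∀ i, X i) : Prop :=
  ∀ i ∈ S, ∀ j ∈ S, i ≠ j → R i j (f i) (f j)

/-- Part (1) of Lemma 4.2 (lem:productup): if in the incidence system
`(X, R)` every flag extends to a chamber (a flag of type `I`), then for every
`n ≥ 1` the same holds in the `n`-th power system, whose elements of type `i`
are `n`-tuples of elements of `X i` with coordinatewise incidence. -/
theorem stmt13 {I : Type*} [Fintype I] {X : I → Type*}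
    (R : ∀ i j, X i → X j → Prop)
    (hsymm : ∀ i j (x : X i) (y : X j), R i j x y ↔ R j i y x)
    (hext : ∀ (S : Set I) (f : ∀ i, X i), IsFlagOn R S f →
      ∃ c : ∀ i, X i, IsFlagOn R Set.univ c ∧ ∀ i ∈ S, c i = f i) :
    ∀ n : ℕ, 1 ≤ n →
      ∀ (S : Set I) (F : ∀ i, Fin n → X i),
        IsFlagOn (fun i j (f : Fin n → X i) (g : Fin n → X j) =>
          ∀ ℓ, R i j (f ℓ) (g ℓ)) S F →
        ∃ C : ∀ i, Fin n → X i,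
          IsFlagOn (fun i j (f : Fin n → X i) (g : Fin n → X j) =>
            ∀ ℓ, R i j (f ℓ) (g ℓ)) Set.univ C ∧
          ∀ i ∈ S, C i = F i := by
  intro n _ S F hF
  choose c hc hagree using fun ℓ : Fin n =>
    hext S (fun i => F i ℓ) (fun i hi j hj hij => hF i hi j hj hij ℓ)
  refine ⟨fun i ℓ => c ℓ i, fun i _ j _ hij ℓ => hc ℓ i trivial j trivial hij, ?_⟩
  intro i hi
  funext ℓ
  exact hagree ℓ i hi
end

section
/- Let I be a finite index type, let X : I → Type be a family of types, and let R be a family of relations R i j : X i → X j → Prop satisfying the symmetry condition R i j x y ↔ R j i y x. Call a function f defined on a subset S ⊆ I with f i ∈ X i a flag of type S if R i j (f i) (f j) holds for all distinct i, j ∈ S, and call a flag of type I a chamber. Let r be a natural number and suppose that every flag is contained in at least r chambers. Then for every n ≥ 1, in the n-th power system (family X′ i = (X i)^n, relations R′ i j f g ⇔ ∀ ℓ ≤ n, R i j (f ℓ) (g ℓ)) every flag is contained in at least r^n chambers. -/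
/-- The counting step of part (2) of Lemma 4.2 (lem:productup): if in the
incidence system `(X, R)` every flag is contained in at least `r` chambers,
then for every `n ≥ 1`, in the `n`-th power system (with coordinatewise
incidence on `n`-tuples) every flag is contained in at least `r ^ n`
chambers. -/
theorem stmt14 {I : Type*} [Fintype I] {X : I → Type*}
    (R : ∀ i j, X i → X j → Prop)
    (hsymm : ∀ i j (x : X i) (y : X j), R i j x y ↔ R j i y x)
    (r : ℕ)
    (hcount : ∀ (S : Set I) (f : ∀ i, X i), IsFlagOn R S f →
      (r : Cardinal) ≤
        Cardinal.mk {c : ∀ i, X i // IsFlagOn R Set.univ c ∧ ∀ i ∈ S, c i = f i}) :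
    ∀ n : ℕ, 1 ≤ n →
      ∀ (S : Set I) (F : ∀ i, Fin n → X i),
        IsFlagOn (fun i j (f : Fin n → X i) (g : Fin n → X j) =>
          ∀ ℓ, R i j (f ℓ) (g ℓ)) S F →
        ((r ^ n : ℕ) : Cardinal) ≤
          Cardinal.mk {C : ∀ i, Fin n → X i //
            IsFlagOn (fun i j (f : Fin n → X i) (g : Fin n → X j) =>
              ∀ ℓ, R i j (f ℓ) (g ℓ)) Set.univ C ∧ ∀ i ∈ S, C i = F i} := by
  intro n _ S F hF
  -- the componentwise flag at each coordinate ℓ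
  have hFℓ : ∀ ℓ : Fin n, IsFlagOn R S (fun i => F i ℓ) := by
    intro ℓ i hi j hj hij
    exact hF i hi j hj hij ℓ
  -- equivalence with the product of component chamber sets
  let T : Fin n → Type _ := fun ℓ =>
    {c : ∀ i, X i // IsFlagOn R Set.univ c ∧ ∀ i ∈ S, c i = F i ℓ}
  have e : {C : ∀ i, Fin n → X i //
      IsFlagOn (fun i j (f : Fin n → X i) (g : Fin n → X j) =>
        ∀ ℓ, R i j (f ℓ) (g ℓ)) Set.univ C ∧ ∀ i ∈ S, C i = F i} ≃ (∀ ℓ, T ℓ) :=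
    { toFun := fun C ℓ => ⟨fun i => C.1 i ℓ,
        fun i hi j hj hij => C.2.1 i hi j hj hij ℓ,
        fun i hi => congrFun (C.2.2 i hi) ℓ⟩
      invFun := fun g => ⟨fun i ℓ => (g ℓ).1 i,
        ⟨fun i hi j hj hij ℓ => (g ℓ).2.1 i hi j hj hij,
         fun i hi => funext fun ℓ => (g ℓ).2.2 i hi⟩⟩
      left_inv := fun C => rfl
      right_inv := fun g => rfl }
  rw [Cardinal.mk_congr e, Cardinal.mk_pi]
  calc ((r ^ n : ℕ) : Cardinal)
      = Cardinal.prod (fun _ : Fin n => (r : Cardinal)) := by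
        simp [Cardinal.prod_const, Cardinal.mk_fin, Nat.cast_pow,
          Cardinal.power_natCast]
    _ ≤ Cardinal.prod (fun ℓ => Cardinal.mk (T ℓ)) :=
        Cardinal.prod_le_prod _ _ fun ℓ => hcount S (fun i => F i ℓ) (hFℓ ℓ)
end
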